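/- arXiv:1903.01076 — 5 statements merged into one kernel-verified Lean document; each statement's English description precedes it below -/
import Mathlib

section
/- Let H be a transitive subgroup of the symmetric group S_n with n ≥ 2. Then there exists an element σ ∈ H such that σ(i) ≠ i for all i ∈ {1, ..., n} (i.e., H contains a fixed-point-free permutation). -/
/-!
By Burnside's lemma, the numbers of fixed points of the elements of a finite group acting
transitively average to the number of orbits, `1`. The identity fixes all `|X| ≥ 2` points, so if
every element fixed at least one point the average would exceed `1`.
-/

namespace MulAction

variable {G X : Type*} [Group G] [MulAction G X]

open scoped Classical in
theorem sum_card_fixedBy_eq_card_group_of_isPretransitive [Fintype G] [Fintype X] [Nonempty X]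
    [IsPretransitive G X] : ∑ g : G, Fintype.card (fixedBy X g) = Fintype.card G := by
  have : Unique (orbitRel.Quotient G X) :=
    ((pretransitive_iff_unique_quotient_of_nonempty G X).mp inferInstance).some
  simpa using sum_card_fixedBy_eq_card_orbits_mul_card_group G X

theorem exists_forall_smul_ne_of_isPretransitive [Finite G] [Finite X] [Nontrivial X]
    [IsPretransitive G X] : ∃ g : G, ∀ x : X, g • x ≠ x := by
  classical
  have := Fintype.ofFinite G
  have := Fintype.ofFinite X
  by_contra! hfix
  have hpos (g : G) : 1 ≤ Fintype.card (fixedBy X g) := by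
    obtain ⟨x, hx⟩ := hfix g
    exact Fintype.card_pos_iff.mpr ⟨⟨x, hx⟩⟩
  have hone : 1 < Fintype.card (fixedBy X (1 : G)) := by
    simpa [fixedBy_one_eq_univ] using Fintype.one_lt_card (α := X)
  have hlt : ∑ _g : G, 1 < ∑ g : G, Fintype.card (fixedBy X g) :=
    Finset.sum_lt_sum (fun g _ ↦ hpos g) ⟨1, Finset.mem_univ _, hone⟩
  rw [sum_card_fixedBy_eq_card_group_of_isPretransitive] at hlt
  simp at hlt

end MulAction

theorem transitive_subgroup_has_fixed_point_free_element
    (n : ℕ) (hn : 2 ≤ n) (H : Subgroup (Equiv.Perm (Fin n)))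
    (htrans : ∀ i j : Fin n, ∃ σ ∈ H, σ i = j) :
    ∃ σ ∈ H, ∀ i : Fin n, σ i ≠ i := by
  have : Nontrivial (Fin n) := Fin.nontrivial_iff_two_le.mpr hn
  have : MulAction.IsPretransitive H (Fin n) :=
    ⟨fun i j ↦ by
      obtain ⟨σ, hσ, hσij⟩ := htrans i j
      exact ⟨⟨σ, hσ⟩, hσij⟩⟩
  obtain ⟨⟨σ, hσ⟩, hfree⟩ :=
    MulAction.exists_forall_smul_ne_of_isPretransitive (G := H) (X := Fin n)
  exact ⟨σ, hσ, hfree⟩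
end

section
/- Let F(x,y) be an integral binary form of degree n ≥ 2, and let p be a prime with p ≤ l < 2p such that F(x,1) mod p has no root in ℤ/pℤ and p does not divide the leading coefficient of F(x,1). Then the equation F(x,y) = l! has no integer solutions (x,y). -/
theorem binary_form_ne_factorial (n : ℕ) (hn : 2 ≤ n) (a : ℕ → ℤ)
    (p : ℕ) (hp : p.Prime) (l : ℕ) (hpl : p ≤ l) (hl2p : l < 2 * p)
    (hnoroot : ∀ x : ℤ, ¬ (p : ℤ) ∣ ∑ i ∈ Finset.range (n + 1), a i * x ^ i)
    (hlead : ¬ (p : ℤ) ∣ a n) :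
    ¬ ∃ x y : ℤ,
      ∑ i ∈ Finset.range (n + 1), a i * x ^ i * y ^ (n - i) = (Nat.factorial l : ℤ) := by
  rintro ⟨x, y, hF⟩
  haveI : Fact p.Prime := ⟨hp⟩
  have hp2 : 2 ≤ p := hp.two_le
  -- p ∣ l!
  have hpd : (p : ℤ) ∣ (Nat.factorial l : ℤ) := by
    exact_mod_cast Int.natCast_dvd_natCast.2 (Nat.dvd_factorial hp.pos hpl)
  -- p^2 ∤ l!
  have hnp2 : ¬ (p^2 : ℕ) ∣ Nat.factorial l := by
    have hlog : Nat.log p l < 2 := by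
      apply Nat.log_lt_of_lt_pow (by omega)
      calc l < 2 * p := hl2p
        _ ≤ p * p := by nlinarith
        _ = p ^ 2 := (sq p).symm
    rw [Nat.Prime.pow_dvd_factorial_iff hp hlog]
    have : ∑ i ∈ Finset.Ico 1 2, l / p ^ i = l / p := by simp
    rw [this]
    have h1 : 1 ≤ l / p := (Nat.one_le_div_iff (by omega)).2 hpl
    have h2 : l / p < 2 := Nat.div_lt_of_lt_mul (by omega)
    omega
  -- reduce mod p
  have hred : ∑ i ∈ Finset.range (n + 1), (a i : ZMod p) * (x : ZMod p) ^ i *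
      (y : ZMod p) ^ (n - i) = 0 := by
    have := congrArg (fun z : ℤ => (z : ZMod p)) hF
    push_cast at this
    rw [this]
    exact_mod_cast (ZMod.natCast_eq_zero_iff _ _).2 (Nat.dvd_factorial hp.pos hpl)
  have hnoroot' : ∀ t : ZMod p, ∑ i ∈ Finset.range (n + 1), (a i : ZMod p) * t ^ i ≠ 0 := by
    intro t ht
    obtain ⟨z, rfl⟩ := ZMod.intCast_surjective t
    apply hnoroot z
    rw [← ZMod.intCast_zmod_eq_zero_iff_dvd]
    push_cast
    exact ht
  by_cases hy : (y : ZMod p) = 0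
  · -- then a n * x^n = 0 mod p, so x ≡ 0
    have hx : (x : ZMod p) = 0 := by
      have : (a n : ZMod p) * (x : ZMod p) ^ n = 0 := by
        rw [← hred, Finset.sum_range_succ]
        have hz : ∀ i ∈ Finset.range n, (a i : ZMod p) * (x : ZMod p) ^ i *
            (y : ZMod p) ^ (n - i) = 0 := by
          intro i hi
          rw [Finset.mem_range] at hi
          rw [hy, zero_pow (by omega), mul_zero]
        rw [Finset.sum_congr rfl hz, Finset.sum_const_zero, Nat.sub_self, pow_zero,
          mul_one, zero_add]
      have han : (a n : ZMod p) ≠ 0 := fun h =>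
        hlead ((ZMod.intCast_zmod_eq_zero_iff_dvd _ _).1 h)
      rcases mul_eq_zero.1 this with h | h
      · exact absurd h han
      · exact pow_eq_zero_iff (by omega) |>.1 h
    -- p ∣ x and p ∣ y, so p^2 ∣ F(x,y) = l!
    have hdx : (p : ℤ) ∣ x := (ZMod.intCast_zmod_eq_zero_iff_dvd _ _).1 hx
    have hdy : (p : ℤ) ∣ y := (ZMod.intCast_zmod_eq_zero_iff_dvd _ _).1 hy
    have hsq : ((p : ℤ))^2 ∣ (Nat.factorial l : ℤ) := by
      rw [← hF]
      apply Finset.dvd_sum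
      intro i hi
      rw [Finset.mem_range] at hi
      have : ((p : ℤ))^i * ((p : ℤ))^(n - i) ∣ x ^ i * y ^ (n - i) :=
        mul_dvd_mul (pow_dvd_pow_of_dvd hdx i) (pow_dvd_pow_of_dvd hdy (n - i))
      have hpn : ((p : ℤ))^2 ∣ ((p : ℤ))^i * ((p : ℤ))^(n - i) := by
        rw [← pow_add]
        exact pow_dvd_pow _ (by omega)
      rw [mul_assoc]
      exact Dvd.dvd.mul_left (hpn.trans this) (a i)
    apply hnp2
    have : ((p^2 : ℕ) : ℤ) ∣ (Nat.factorial l : ℤ) := by push_cast; exact hsq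
    exact_mod_cast this
  · -- y invertible mod p: contradiction with no-root
    apply hnoroot' ((x : ZMod p) * (y : ZMod p)⁻¹)
    have key : ∀ i ∈ Finset.range (n + 1),
        (a i : ZMod p) * ((x : ZMod p) * (y : ZMod p)⁻¹) ^ i =
        ((a i : ZMod p) * (x : ZMod p) ^ i * (y : ZMod p) ^ (n - i)) * ((y : ZMod p)⁻¹) ^ n := by
      intro i hi
      rw [Finset.mem_range] at hi
      rw [mul_pow]
      have h1 : ((y : ZMod p)⁻¹) ^ i = (y : ZMod p) ^ (n - i) * ((y : ZMod p)⁻¹) ^ n := by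
        obtain ⟨m, rfl⟩ : ∃ m, n = m + i := ⟨n - i, by omega⟩
        rw [Nat.add_sub_cancel, pow_add, ← mul_assoc, ← mul_pow, mul_inv_cancel₀ hy,
          one_pow, one_mul]
      rw [h1]; ring
    rw [Finset.sum_congr rfl key, ← Finset.sum_mul, hred, zero_mul]
end

section
/- Let S = {a·m + b : m ∈ ℤ} for integers a ≠ 0 and b. Then the Bhargava factorial of S satisfies l!_S = a^l · l! for all nonnegative integers l. -/
open Finset Polynomial

lemma hasseDeriv_eq_of_natDegree_le (P : Polynomial ℤ) (k : ℕ) (h : P.natDegree ≤ k + 1) :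
    Polynomial.hasseDeriv k P = C (P.coeff k) + C ((k+1 : ℤ) * P.coeff (k+1)) * X := by
  ext i
  rw [Polynomial.hasseDeriv_coeff]
  match i with
  | 0 =>
    simp only [zero_add, Nat.choose_self, Nat.cast_one, one_mul, coeff_add, coeff_C,
      coeff_C_mul, coeff_X]
    norm_num
  | 1 =>
    rw [Nat.add_comm 1 k, Nat.choose_succ_self_right]
    simp only [coeff_add, coeff_C, coeff_C_mul, coeff_X]
    norm_num
  | (i+2) =>
    rw [Polynomial.coeff_eq_zero_of_natDegree_lt (lt_of_le_of_lt h (by omega))]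
    simp only [coeff_add, coeff_C, coeff_C_mul, coeff_X]
    norm_num

lemma fwdDiff_iter_polynomial_eval (n : ℕ) (P : Polynomial ℤ) (hP : P.natDegree ≤ n) :
    (fwdDiff (1:ℤ))^[n] (fun y : ℤ => P.eval y) = fun _ => (Nat.factorial n : ℤ) * P.coeff n := by
  induction n generalizing P with
  | zero =>
    funext y
    rw [Polynomial.eq_C_of_natDegree_le_zero hP]
    simp
  | succ n ih =>
    set Q : Polynomial ℤ := Polynomial.taylor 1 P - P with hQ
    have hQc : ∀ k, P.natDegree ≤ k + 1 →
        Q.coeff k = P.coeff k + (k+1 : ℤ) * P.coeff (k+1) - P.coeff k := by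
      intro k hk
      rw [hQ, Polynomial.coeff_sub, Polynomial.taylor_coeff,
        hasseDeriv_eq_of_natDegree_le P k hk]
      simp
    have hQdeg : Q.natDegree ≤ n := by
      rw [Polynomial.natDegree_le_iff_coeff_eq_zero]
      intro N hN
      have h0 : P.coeff (N + 1) = 0 := Polynomial.coeff_eq_zero_of_natDegree_lt (by omega)
      rw [hQc N (by omega), h0]
      ring
    have key : fwdDiff (1:ℤ) (fun y : ℤ => P.eval y) = fun y : ℤ => Q.eval y := by
      funext y
      simp [fwdDiff, hQ, Polynomial.taylor_eval]
    rw [Function.iterate_succ_apply, key, ih Q hQdeg, hQc n hP]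
    funext y
    simp [Nat.factorial_succ]
    ring

lemma key_identity (m : ℕ → ℤ) (n : ℕ) :
    (Nat.factorial n : ℤ) = ∑ k ∈ range (n+1),
      ((-1:ℤ)^(n-k) * (n.choose k : ℤ)) * (∏ i ∈ range n, ((k:ℤ) - m i)) := by
  set P : Polynomial ℤ := ∏ i ∈ range n, (X - C (m i)) with hP
  have hmonic : P.Monic := monic_prod_of_monic _ _ (fun i _ => monic_X_sub_C _)
  have hdeg : P.natDegree = n := by
    rw [hP, Polynomial.natDegree_prod _ _ (fun i _ => X_sub_C_ne_zero _)]
    simp only [Polynomial.natDegree_X_sub_C]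
    simp
  have hcoeff : P.coeff n = 1 := by
    rw [← hdeg]; exact hmonic.coeff_natDegree
  have heval : ∀ y : ℤ, P.eval y = ∏ i ∈ range n, (y - m i) := by
    intro y; rw [hP]; simp [Polynomial.eval_prod]
  have h1 := fwdDiff_iter_eq_sum_shift (1:ℤ) (fun y : ℤ => P.eval y) n 0
  rw [fwdDiff_iter_polynomial_eval n P (le_of_eq hdeg)] at h1
  rw [hcoeff, mul_one] at h1
  refine h1.trans (Finset.sum_congr rfl fun k hk => ?_)
  simp only [smul_eq_mul, zero_add, nsmul_eq_mul, mul_one, heval]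

lemma prod_pairs (w : ℕ → ℤ) (n : ℕ) :
    (∏ i : Fin n, ∏ j ∈ Finset.Ioi i, (w j - w i)) =
      ∏ k ∈ Finset.range n, ∏ i ∈ Finset.range k, (w k - w i) := by
  rw [Finset.prod_sigma', Finset.prod_sigma']
  apply Finset.prod_bij (fun (x : Σ _ : Fin n, Fin n) _ => (⟨(x.2 : ℕ), (x.1 : ℕ)⟩ : Σ _ : ℕ, ℕ))
  · rintro ⟨i, j⟩ hx
    simp only [Finset.mem_sigma, Finset.mem_univ, Finset.mem_Ioi, true_and] at hx
    simp only [Finset.mem_sigma, Finset.mem_range]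
    exact ⟨j.isLt, hx⟩
  · rintro ⟨i1, j1⟩ h1 ⟨i2, j2⟩ h2 heq
    have e1 : (j1 : ℕ) = (j2 : ℕ) := congrArg Sigma.fst heq
    have e2 : (i1 : ℕ) = (i2 : ℕ) := congrArg Sigma.snd heq
    have e1' : j1 = j2 := Fin.ext e1
    have e2' : i1 = i2 := Fin.ext e2
    subst e1' e2'
    rfl
  · rintro ⟨k, i⟩ hk
    simp only [Finset.mem_sigma, Finset.mem_range] at hk
    refine ⟨⟨⟨i, by omega⟩, ⟨k, by omega⟩⟩, ?_, rfl⟩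
    simp only [Finset.mem_sigma, Finset.mem_univ, Finset.mem_Ioi, true_and]
    exact hk.2
  · rintro ⟨i, j⟩ hx
    rfl

lemma superfactorial_dvd_prod (m : ℕ → ℤ) (l : ℕ) :
    ((Nat.superFactorial l : ℤ)) ∣
      ∏ k ∈ Finset.range (l+1), ∏ i ∈ Finset.range k, (m k - m i) := by
  have h := Matrix.superFactorial_dvd_vandermonde_det (fun i : Fin (l+1) => m i)
  rwa [Matrix.det_vandermonde, prod_pairs (fun i => m i) (l+1)] at h

lemma padicValInt_prod {p : ℕ} [Fact p.Prime] {ι : Type*} (s : Finset ι) (f : ι → ℤ)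
    (hf : ∀ i ∈ s, f i ≠ 0) :
    padicValInt p (∏ i ∈ s, f i) = ∑ i ∈ s, padicValInt p (f i) := by
  classical
  induction s using Finset.cons_induction with
  | empty => simp [padicValInt.one]
  | cons a s ha ih =>
    rw [Finset.prod_cons, Finset.sum_cons,
      padicValInt.mul (hf a (Finset.mem_cons_self a s))
        (Finset.prod_ne_zero_iff.mpr fun i hi => hf i (Finset.mem_cons_of_mem hi)),
      ih fun i hi => hf i (Finset.mem_cons_of_mem hi)]

lemma padicValInt_le_of_dvd {p : ℕ} [Fact p.Prime] {x y : ℤ} (h : x ∣ y) (hx : x ≠ 0)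
    (hy : y ≠ 0) : padicValInt p x ≤ padicValInt p y := by
  obtain ⟨z, rfl⟩ := h
  have hz : z ≠ 0 := by rintro rfl; simp at hy
  rw [padicValInt.mul hx hz]
  exact Nat.le_add_right _ _

/-- `c` is a `p`-ordering of the set `S ⊆ ℤ`: a sequence in `S` such that at each step `n`,
`c n` minimizes the `p`-adic valuation of `∏_{k<n} (x - c k)` over `x ∈ S`
(in particular this valuation is finite, i.e. the product is nonzero). -/
def IsPOrdering (p : ℕ) (S : Set ℤ) (c : ℕ → ℤ) : Prop :=
  (∀ n, c n ∈ S) ∧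
  (∀ n, ∏ k ∈ Finset.range n, (c n - c k) ≠ 0) ∧
  (∀ n, ∀ x ∈ S,
    ∏ k ∈ Finset.range n, (x - c k) ≠ 0 →
    padicValInt p (∏ k ∈ Finset.range n, (c n - c k)) ≤
      padicValInt p (∏ k ∈ Finset.range n, (x - c k)))

/-- For the arithmetic progression `S = aℤ + b`, the Bhargava factorial satisfies
`l!_S = a^l · l!`, expressed via the `p`-adic valuation `v_p(l; S)` for every prime `p`
and every `p`-ordering. -/
theorem bhargava_factorial_of_arithmetic_progression
    (a b : ℤ) (ha : a ≠ 0) (S : Set ℤ) (hS : S = {z : ℤ | ∃ m : ℤ, z = a * m + b})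
    (p : ℕ) (hp : p.Prime) (c : ℕ → ℤ) (hc : IsPOrdering p S c) (l : ℕ) :
    padicValInt p (∏ k ∈ Finset.range l, (c l - c k)) =
      padicValInt p (a ^ l * (Nat.factorial l : ℤ)) := by
  haveI : Fact p.Prime := ⟨hp⟩
  obtain ⟨hmem, hne, hmin⟩ := hc
  have hex : ∀ k, ∃ mk : ℤ, c k = a * mk + b := fun k => by
    have h := hmem k; rw [hS] at h; exact h
  choose m hm using hex
  have hprod : ∀ (n : ℕ) (y : ℤ), ∏ k ∈ Finset.range n, ((a * y + b) - c k) =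
      a ^ n * ∏ k ∈ Finset.range n, (y - m k) := by
    intro n y
    calc ∏ k ∈ Finset.range n, ((a * y + b) - c k)
        = ∏ k ∈ Finset.range n, (a * (y - m k)) :=
          Finset.prod_congr rfl fun k _ => by rw [hm k]; ring
      _ = a ^ n * ∏ k ∈ Finset.range n, (y - m k) := by
          rw [Finset.prod_mul_distrib, Finset.prod_const, Finset.card_range]
  have hprodc : ∀ n : ℕ, ∏ k ∈ Finset.range n, (c n - c k) =
      a ^ n * ∏ k ∈ Finset.range n, (m n - m k) := by
    intro n
    calc ∏ k ∈ Finset.range n, (c n - c k)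
        = ∏ k ∈ Finset.range n, ((a * m n + b) - c k) := by rw [← hm n]
      _ = _ := hprod n (m n)
  set F : ℕ → ℤ := fun n => ∏ k ∈ Finset.range n, (m n - m k) with hF
  have hFne : ∀ n, F n ≠ 0 := by
    intro n
    have h := hne n
    rw [hprodc n] at h
    intro h0
    apply h
    have h0' : ∏ k ∈ Finset.range n, (m n - m k) = 0 := h0
    rw [h0', mul_zero]
  have hmin' : ∀ (n : ℕ) (y : ℤ), (∏ k ∈ Finset.range n, (y - m k)) ≠ 0 →
      padicValInt p (F n) ≤ padicValInt p (∏ k ∈ Finset.range n, (y - m k)) := by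
    intro n y hy
    have hxS : a * y + b ∈ S := by rw [hS]; exact ⟨y, rfl⟩
    have h2 := hmin n (a * y + b) hxS
      (by rw [hprod]; exact mul_ne_zero (pow_ne_zero _ ha) hy)
    rw [hprodc n, hprod n y, padicValInt.mul (pow_ne_zero _ ha) (hFne n),
      padicValInt.mul (pow_ne_zero _ ha) hy] at h2
    omega
  have upper : ∀ n, padicValInt p (F n) ≤ padicValNat p (Nat.factorial n) := by
    intro n
    have hdvd : (p : ℤ) ^ (padicValInt p (F n)) ∣ (Nat.factorial n : ℤ) := by
      rw [key_identity m n]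
      apply Finset.dvd_sum
      intro k _
      apply Dvd.dvd.mul_left
      rcases eq_or_ne (∏ i ∈ Finset.range n, ((k:ℤ) - m i)) 0 with h | h
      · rw [h]; exact dvd_zero _
      · exact (padicValInt_dvd_iff _ _).mpr (Or.inr (hmin' n k h))
    rcases (padicValInt_dvd_iff (padicValInt p (F n)) (Nat.factorial n : ℤ)).mp hdvd with h | h
    · exact absurd h (by exact_mod_cast Nat.factorial_ne_zero n)
    · rwa [padicValInt.of_nat] at h
  have hsum : ∑ k ∈ Finset.range (l+1), padicValNat p (Nat.factorial k)
      ≤ ∑ k ∈ Finset.range (l+1), padicValInt p (F k) := by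
    have hsf : (Nat.superFactorial l) ≠ 0 := by
      rw [← Nat.prod_range_succ_factorial]
      exact Finset.prod_ne_zero_iff.mpr fun i _ => Nat.factorial_ne_zero i
    have h1 : padicValInt p ((Nat.superFactorial l : ℤ)) ≤
        padicValInt p (∏ k ∈ Finset.range (l+1), F k) := by
      apply padicValInt_le_of_dvd (superfactorial_dvd_prod m l)
      · exact_mod_cast hsf
      · exact Finset.prod_ne_zero_iff.mpr fun i _ => hFne i
    rw [padicValInt_prod _ _ (fun i _ => hFne i)] at h1
    have h2 : padicValInt p ((Nat.superFactorial l : ℤ)) =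
        ∑ k ∈ Finset.range (l+1), padicValNat p (Nat.factorial k) := by
      rw [show ((Nat.superFactorial l : ℤ)) =
          ∏ k ∈ Finset.range (l+1), (Nat.factorial k : ℤ) by
        rw [← Nat.prod_range_succ_factorial l]; push_cast; rfl]
      rw [padicValInt_prod _ _ (fun i _ => by exact_mod_cast Nat.factorial_ne_zero i)]
      exact Finset.sum_congr rfl fun i _ => padicValInt.of_nat
    omega
  have hFl : padicValInt p (F l) = padicValNat p (Nat.factorial l) := by
    rw [Finset.sum_range_succ, Finset.sum_range_succ] at hsum
    have h4 : ∑ k ∈ Finset.range l, padicValInt p (F k) ≤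
        ∑ k ∈ Finset.range l, padicValNat p (Nat.factorial k) :=
      Finset.sum_le_sum fun k _ => upper k
    exact le_antisymm (upper l) (by omega)
  rw [hprodc l, padicValInt.mul (pow_ne_zero _ ha) (hFne l),
    padicValInt.mul (pow_ne_zero _ ha)
      (by exact_mod_cast Nat.factorial_ne_zero l : ((Nat.factorial l : ℤ)) ≠ 0),
    hFl, padicValInt.of_nat]
end

section
/- Let p be an odd prime and f(x) = ax² + bx + c with p ∤ a, and let S = f(ℤ). Then the p-adic valuation of the Bhargava factorial l!_S equals 0 for 0 ≤ l ≤ (p-1)/2, equals 1 for (p+1)/2 ≤ l ≤ p-1, and equals 2 for l = p. -/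
section Aux

variable {p : ℕ} [hp : Fact p.Prime]

lemma padicValInt_prod_s17 (n : ℕ) (g : ℕ → ℤ) (hg : ∀ k ∈ Finset.range n, g k ≠ 0) :
    padicValInt p (∏ k ∈ Finset.range n, g k) = ∑ k ∈ Finset.range n, padicValInt p (g k) := by
  induction n with
  | zero => simp
  | succ n ih =>
    rw [Finset.prod_range_succ, Finset.sum_range_succ,
      padicValInt.mul (Finset.prod_ne_zero_iff.mpr fun i hi =>
        hg i (Finset.mem_range.mpr (lt_trans (Finset.mem_range.mp hi) (Nat.lt_succ_self n))))
        (hg n (Finset.mem_range.mpr (Nat.lt_succ_self n))),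
      ih fun i hi => hg i (Finset.mem_range.mpr (lt_trans (Finset.mem_range.mp hi) (Nat.lt_succ_self n)))]

lemma one_le_padicValInt {z : ℤ} (hz : z ≠ 0) : (p : ℤ) ∣ z ↔ 1 ≤ padicValInt p z := by
  rw [← pow_one (p : ℤ), padicValInt_dvd_iff]
  simp [hz]

lemma two_le_padicValInt {z : ℤ} (hz : z ≠ 0) : (p : ℤ) ^ 2 ∣ z ↔ 2 ≤ padicValInt p z := by
  rw [padicValInt_dvd_iff]
  simp [hz]

lemma sq_nat_inj (hodd : Odd p) {i j : ℕ} (hi : i < (p + 1) / 2) (hj : j < (p + 1) / 2)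
    (h : (i : ZMod p) ^ 2 = (j : ZMod p) ^ 2) : i = j := by
  obtain ⟨t, ht⟩ := hodd
  have hp2 := hp.out.two_le
  have hij : ((i : ZMod p) - j) * ((i : ZMod p) + j) = 0 := by ring_nf; linear_combination h
  rcases mul_eq_zero.mp hij with h1 | h1
  · have h2 : (i : ZMod p) = j := by linear_combination h1
    have h3 : i ≡ j [MOD p] := (ZMod.natCast_eq_natCast_iff _ _ _).mp h2
    have h4 : i % p = j % p := h3
    have hi' : i < p := by omega
    have hj' : j < p := by omega
    rwa [Nat.mod_eq_of_lt hi', Nat.mod_eq_of_lt hj'] at h4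
  · have h2 : ((i + j : ℕ) : ZMod p) = 0 := by push_cast; linear_combination h1
    have h3 : p ∣ i + j := (ZMod.natCast_eq_zero_iff _ _).mp h2
    rcases Nat.eq_zero_or_pos (i + j) with h5 | h5
    · omega
    · have := Nat.le_of_dvd h5 h3
      omega

lemma mem_sq_image (hodd : Odd p) (z : ZMod p) :
    z ^ 2 ∈ (Finset.range ((p + 1) / 2)).image (fun i : ℕ => (i : ZMod p) ^ 2) := by
  obtain ⟨t, ht⟩ := hodd
  have hp2 := hp.out.two_le
  have hzv := z.val_lt
  rcases le_or_gt z.val ((p - 1) / 2) with h | h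
  · exact Finset.mem_image.mpr ⟨z.val, Finset.mem_range.mpr (by omega),
      by rw [ZMod.natCast_zmod_val]⟩
  · refine Finset.mem_image.mpr ⟨p - z.val, Finset.mem_range.mpr (by omega), ?_⟩
    have hcast : ((p - z.val : ℕ) : ZMod p) = -z := by
      rw [Nat.cast_sub hzv.le, ZMod.natCast_self, ZMod.natCast_zmod_val]
      ring
    rw [hcast]
    ring

lemma sq_image_card (hodd : Odd p) :
    ((Finset.range ((p + 1) / 2)).image (fun i : ℕ => (i : ZMod p) ^ 2)).card = (p + 1) / 2 := by
  rw [Finset.card_image_of_injOn fun i hi j hj hij =>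
    sq_nat_inj hodd (Finset.mem_range.mp hi) (Finset.mem_range.mp hj) hij, Finset.card_range]

end Aux

theorem bhargava_valuation_of_quadratic_image
    (p : ℕ) (hp : p.Prime) (hodd : Odd p)
    (a b c : ℤ) (ha : ¬ (p : ℤ) ∣ a)
    (S : Set ℤ) (hS : S = {z : ℤ | ∃ m : ℤ, z = a * m ^ 2 + b * m + c})
    (o : ℕ → ℤ) (ho : IsPOrdering p S o) (l : ℕ) :
    (l ≤ (p - 1) / 2 → padicValInt p (∏ k ∈ Finset.range l, (o l - o k)) = 0) ∧
    ((p + 1) / 2 ≤ l → l ≤ p - 1 →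
      padicValInt p (∏ k ∈ Finset.range l, (o l - o k)) = 1) ∧
    (l = p → padicValInt p (∏ k ∈ Finset.range l, (o l - o k)) = 2) := by
  haveI hfact : Fact p.Prime := ⟨hp⟩
  obtain ⟨t, ht⟩ := hodd
  have hp2 := hp.two_le
  have ht1 : 1 ≤ t := by
    by_contra h
    interval_cases t <;> omega
  have hodd' : Odd p := ⟨t, ht⟩
  set r := (p + 1) / 2 with hr
  have hrt : r = t + 1 := by omega
  -- choose preimages
  have hmem : ∀ k, ∃ mm : ℤ, o k = a * mm ^ 2 + b * mm + c := by
    intro k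
    have := ho.1 k
    rw [hS] at this
    exact this
  choose m hm using hmem
  -- cast helpers
  have hcast : ∀ z : ℤ, (p : ℤ) ∣ z ↔ ((z : ZMod p) = 0) :=
    fun z => (ZMod.intCast_zmod_eq_zero_iff_dvd z p).symm
  have haZ : ((a : ZMod p)) ≠ 0 := fun h => ha ((hcast a).mpr h)
  have h2Z : ((2 : ℤ) : ZMod p) ≠ 0 := by
    intro h
    have h1 : (p : ℤ) ∣ 2 := (hcast 2).mpr h
    have h2 : p ∣ 2 := by exact_mod_cast h1
    have := Nat.le_of_dvd (by norm_num) h2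
    omega
  have h2Z' : ((2 : ZMod p)) ≠ 0 := by
    intro h
    exact h2Z (by push_cast; exact h)
  have h4Z : ((4 * a : ℤ) : ZMod p) ≠ 0 := by
    push_cast
    intro h
    rcases mul_eq_zero.mp h with h1 | h1
    · have : (4 : ZMod p) = 2 * 2 := by norm_num
      rw [this] at h1
      rcases mul_eq_zero.mp h1 with h2 | h2 <;> exact h2Z' h2
    · exact haZ h1
  -- class characterization
  have hclassS : ∀ u w : ℤ,
      (((a * u ^ 2 + b * u + c) - (a * w ^ 2 + b * w + c) : ℤ) : ZMod p) = 0 ↔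
      ((2 * a * u + b : ℤ) : ZMod p) ^ 2 = ((2 * a * w + b : ℤ) : ZMod p) ^ 2 := by
    intro u w
    have hk : ((4 * a : ℤ) : ZMod p) *
        (((a * u ^ 2 + b * u + c) - (a * w ^ 2 + b * w + c) : ℤ) : ZMod p) =
        ((2 * a * u + b : ℤ) : ZMod p) ^ 2 - ((2 * a * w + b : ℤ) : ZMod p) ^ 2 := by
      push_cast
      ring
    constructor
    · intro h
      rw [h, mul_zero] at hk
      linear_combination -hk
    · intro h
      have h0 : ((4 * a : ℤ) : ZMod p) *
          (((a * u ^ 2 + b * u + c) - (a * w ^ 2 + b * w + c) : ℤ) : ZMod p) = 0 := by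
        rw [hk, h]
        ring
      rcases mul_eq_zero.mp h0 with h1 | h1
      · exact absurd h1 h4Z
      · exact h1
  -- vertex lemma
  have hV : ∀ u w : ℤ, ((2 * a * u + b : ℤ) : ZMod p) = 0 →
      (((a * u ^ 2 + b * u + c) - (a * w ^ 2 + b * w + c) : ℤ) : ZMod p) = 0 →
      ((u - w : ℤ) : ZMod p) = 0 ∧ ((2 * a * w + b : ℤ) : ZMod p) = 0 := by
    intro u w h1 h2
    have h3 : ((u - w : ℤ) : ZMod p) * ((a * (u + w) + b : ℤ) : ZMod p) = 0 := by
      push_cast at h2 ⊢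
      linear_combination h2
    have hw : ((u - w : ℤ) : ZMod p) = 0 := by
      rcases mul_eq_zero.mp h3 with h' | h'
      · exact h'
      · have h4 : ((a : ℤ) : ZMod p) * (((u : ℤ) : ZMod p) - ((w : ℤ) : ZMod p)) = 0 := by
          push_cast at h' h1 ⊢
          linear_combination h1 - h'
        rcases mul_eq_zero.mp h4 with h'' | h''
        · exact absurd h'' haZ
        · push_cast
          linear_combination h''
    refine ⟨hw, ?_⟩
    push_cast at h1 hw ⊢
    linear_combination h1 - 2 * ((a : ℤ) : ZMod p) * hw
  have hV2 : ∀ u w : ℤ, ((2 * a * u + b : ℤ) : ZMod p) = 0 →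
      (((a * u ^ 2 + b * u + c) - (a * w ^ 2 + b * w + c) : ℤ) : ZMod p) = 0 →
      (p : ℤ) ^ 2 ∣ ((a * u ^ 2 + b * u + c) - (a * w ^ 2 + b * w + c)) := by
    intro u w h1 h2
    obtain ⟨hw1, hw2⟩ := hV u w h1 h2
    have hd1 : (p : ℤ) ∣ (u - w) := (hcast _).mpr hw1
    have hd2 : (p : ℤ) ∣ (a * (u + w) + b) := by
      refine (hcast _).mpr ?_
      push_cast at hw1 hw2 ⊢
      linear_combination hw2 + ((a : ℤ) : ZMod p) * hw1
    have heq : (a * u ^ 2 + b * u + c) - (a * w ^ 2 + b * w + c) =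
        (u - w) * (a * (u + w) + b) := by ring
    rw [heq, pow_two]
    exact mul_dvd_mul hd1 hd2
  -- solvability
  have hsolve : ∀ i : ZMod p, ∃ u : ℤ, ((2 * a * u + b : ℤ) : ZMod p) = i := by
    intro i
    have h2a : ((2 * a : ℤ) : ZMod p) ≠ 0 := by
      push_cast
      exact mul_ne_zero (by exact_mod_cast h2Z) haZ
    set e := ((i - ((b : ℤ) : ZMod p)) * (((2 * a : ℤ) : ZMod p))⁻¹ : ZMod p) with he
    refine ⟨(e.val : ℤ), ?_⟩
    have hev : (((e.val : ℤ) : ℤ) : ZMod p) = e := by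
      push_cast
      exact ZMod.natCast_zmod_val e
    have hme : e * ((2 * a : ℤ) : ZMod p) = i - ((b : ℤ) : ZMod p) := by
      rw [he, mul_assoc, inv_mul_cancel₀ h2a, mul_one]
    push_cast at hme hev ⊢
    linear_combination hme + 2 * ((a : ℤ) : ZMod p) * hev
  -- sequence facts
  have hne : ∀ n k : ℕ, k < n → o n - o k ≠ 0 := fun n k hk =>
    Finset.prod_ne_zero_iff.mp (ho.2.1 n) k (Finset.mem_range.mpr hk)
  have vsum : ∀ n, padicValInt p (∏ k ∈ Finset.range n, (o n - o k)) =
      ∑ k ∈ Finset.range n, padicValInt p (o n - o k) := fun n =>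
    padicValInt_prod_s17 n _ fun k hk => hne n k (Finset.mem_range.mp hk)
  have hQsq : ∀ j k : ℕ, ((o j - o k : ℤ) : ZMod p) = 0 ↔
      ((2 * a * m j + b : ℤ) : ZMod p) ^ 2 = ((2 * a * m k + b : ℤ) : ZMod p) ^ 2 := by
    intro j k
    rw [hm j, hm k]
    exact hclassS (m j) (m k)
  -- main induction
  suffices main : ∀ l : ℕ,
      (l < r → padicValInt p (∏ k ∈ Finset.range l, (o l - o k)) = 0) ∧
      (r ≤ l → l < p → padicValInt p (∏ k ∈ Finset.range l, (o l - o k)) = 1) ∧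
      (l = p → padicValInt p (∏ k ∈ Finset.range l, (o l - o k)) = 2) by
    obtain ⟨m1, m2, m3⟩ := main l
    exact ⟨fun h => m1 (by omega), fun h1 h2 => m2 (by omega) (by omega), m3⟩
  intro l
  induction l using Nat.strong_induction_on with
  | _ l IH =>
  -- distinctness of early residues
  have Dist0 : ∀ j k : ℕ, j < k → k < r → k < l →
      ((2 * a * m j + b : ℤ) : ZMod p) ^ 2 ≠ ((2 * a * m k + b : ℤ) : ZMod p) ^ 2 := by
    intro j k hjk hkr hkl hsq
    have hv0 : padicValInt p (∏ i ∈ Finset.range k, (o k - o i)) = 0 := (IH k hkl).1 hkr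
    rw [vsum k] at hv0
    have hterm : padicValInt p (o k - o j) = 0 :=
      (Finset.sum_eq_zero_iff.mp hv0) j (Finset.mem_range.mpr hjk)
    have hdv : (p : ℤ) ∣ (o k - o j) := (hcast _).mpr ((hQsq k j).mpr hsq.symm)
    have := (one_le_padicValInt (hne k j hjk)).mp hdv
    omega
  have Dist : ∀ j k : ℕ, j < r → k < r → j < l → k < l →
      ((2 * a * m j + b : ℤ) : ZMod p) ^ 2 = ((2 * a * m k + b : ℤ) : ZMod p) ^ 2 → j = k := by
    intro j k hjr hkr hjl hkl hsq
    rcases lt_trichotomy j k with h | h | h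
    · exact absurd hsq (Dist0 j k h hkr hkl)
    · exact h
    · exact absurd hsq.symm (Dist0 k j h hjr hjl)
  -- coverage
  have Cov : r ≤ l → ∀ z : ℤ, z ∈ S → ∃ j, j < r ∧ ((z - o j : ℤ) : ZMod p) = 0 := by
    intro hrl z hz
    rw [hS] at hz
    obtain ⟨u, hu⟩ := hz
    have hAcard : ((Finset.range r).image
        (fun j => ((2 * a * m j + b : ℤ) : ZMod p) ^ 2)).card = r := by
      rw [Finset.card_image_of_injOn fun x hx y hy hxy =>
        Dist x y (Finset.mem_range.mp hx) (Finset.mem_range.mp hy)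
          (lt_of_lt_of_le (Finset.mem_range.mp hx) hrl)
          (lt_of_lt_of_le (Finset.mem_range.mp hy) hrl) hxy, Finset.card_range]
    have hAsub : (Finset.range r).image (fun j => ((2 * a * m j + b : ℤ) : ZMod p) ^ 2) ⊆
        (Finset.range r).image (fun i : ℕ => (i : ZMod p) ^ 2) := by
      intro u0 hu0
      rcases Finset.mem_image.mp hu0 with ⟨j, _, hj⟩
      rw [← hj]
      exact mem_sq_image hodd' _
    have hAeq : (Finset.range r).image (fun j => ((2 * a * m j + b : ℤ) : ZMod p) ^ 2) =
        (Finset.range r).image (fun i : ℕ => (i : ZMod p) ^ 2) :=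
      Finset.eq_of_subset_of_card_le hAsub (by rw [hAcard, sq_image_card hodd'])
    have hmem2 : ((2 * a * u + b : ℤ) : ZMod p) ^ 2 ∈
        (Finset.range r).image (fun j => ((2 * a * m j + b : ℤ) : ZMod p) ^ 2) := by
      rw [hAeq]
      exact mem_sq_image hodd' _
    rcases Finset.mem_image.mp hmem2 with ⟨j, hj, hQj⟩
    refine ⟨j, Finset.mem_range.mp hj, ?_⟩
    rw [hu, hm j]
    exact (hclassS u (m j)).mpr hQj.symm
  -- uniqueness structure for middle indices
  have hD3 : ∀ k : ℕ, r ≤ k → k < l → l ≤ p → ∃ j, j < r ∧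
      ((o k - o j : ℤ) : ZMod p) = 0 ∧ padicValInt p (o k - o j) = 1 ∧
      ((2 * a * m j + b : ℤ) : ZMod p) ≠ 0 ∧
      (∀ j', j' < k → ((o k - o j' : ℤ) : ZMod p) = 0 → j' = j) := by
    intro k hrk hkl hlp
    have hv1 : padicValInt p (∏ i ∈ Finset.range k, (o k - o i)) = 1 :=
      (IH k hkl).2.1 hrk (by omega)
    rw [vsum k] at hv1
    obtain ⟨j, hjr, hj0⟩ := Cov (le_trans hrk hkl.le) (o k) (ho.1 k)
    have hjk : j < k := lt_of_lt_of_le hjr hrk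
    have hj1 : 1 ≤ padicValInt p (o k - o j) :=
      (one_le_padicValInt (hne k j hjk)).mp ((hcast _).mpr hj0)
    have hle : padicValInt p (o k - o j) ≤ 1 := by
      calc padicValInt p (o k - o j)
          ≤ ∑ i ∈ Finset.range k, padicValInt p (o k - o i) :=
            Finset.single_le_sum (f := fun i => padicValInt p (o k - o i))
              (fun i _ => Nat.zero_le _) (Finset.mem_range.mpr hjk)
        _ = 1 := hv1
    have hj2 : padicValInt p (o k - o j) = 1 := le_antisymm hle hj1
    have huniq : ∀ j', j' < k → ((o k - o j' : ℤ) : ZMod p) = 0 → j' = j := by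
      intro j' hj'k hj'0
      by_contra hj'j
      have h1' : 1 ≤ padicValInt p (o k - o j') :=
        (one_le_padicValInt (hne k j' hj'k)).mp ((hcast _).mpr hj'0)
      have hsub : ({j', j} : Finset ℕ) ⊆ Finset.range k := by
        intro x hx
        rcases Finset.mem_insert.mp hx with h | h
        · exact Finset.mem_range.mpr (h ▸ hj'k)
        · exact Finset.mem_range.mpr ((Finset.mem_singleton.mp h) ▸ hjk)
      have hps : padicValInt p (o k - o j') + padicValInt p (o k - o j) ≤
          ∑ i ∈ Finset.range k, padicValInt p (o k - o i) := by
        simpa [Finset.sum_pair hj'j] using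
          Finset.sum_le_sum_of_subset (f := fun i => padicValInt p (o k - o i)) hsub
      omega
    refine ⟨j, hjr, hj0, hj2, ?_, huniq⟩
    intro hQj0
    have hsym : (((a * m j ^ 2 + b * m j + c) -
        (a * m k ^ 2 + b * m k + c) : ℤ) : ZMod p) = 0 := by
      rw [← hm j, ← hm k]
      push_cast at hj0 ⊢
      linear_combination -hj0
    have hdd := hV2 (m j) (m k) hQj0 hsym
    rw [← hm j, ← hm k] at hdd
    have hdd' : (p : ℤ) ^ 2 ∣ (o k - o j) := by
      have := dvd_neg.mpr hdd
      rwa [neg_sub] at this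
    have := (two_le_padicValInt (hne k j hjk)).mp hdd'
    omega
  -- choice of partner function
  have hcf0 : ∀ k : ℕ, ∃ j, r ≤ k → k < l → l ≤ p → (j < r ∧
      ((o k - o j : ℤ) : ZMod p) = 0 ∧ padicValInt p (o k - o j) = 1 ∧
      ((2 * a * m j + b : ℤ) : ZMod p) ≠ 0 ∧
      (∀ j', j' < k → ((o k - o j' : ℤ) : ZMod p) = 0 → j' = j)) := by
    intro k
    by_cases h : r ≤ k ∧ k < l ∧ l ≤ p
    · obtain ⟨j, hj⟩ := hD3 k h.1 h.2.1 h.2.2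
      exact ⟨j, fun _ _ _ => hj⟩
    · exact ⟨0, fun h1 h2 h3 => absurd ⟨h1, h2, h3⟩ h⟩
  choose cf hcf using hcf0
  have cInj : l ≤ p → ∀ k1 k2, r ≤ k1 → k1 < l → r ≤ k2 → k2 < l →
      cf k1 = cf k2 → k1 = k2 := by
    intro hlp k1 k2 hr1 hl1 hr2 hl2 hcc
    have spec1 := hcf k1 hr1 hl1 hlp
    have spec2 := hcf k2 hr2 hl2 hlp
    rcases lt_trichotomy k1 k2 with h | h | h
    · exfalso
      have h02 : ((o k2 - o k1 : ℤ) : ZMod p) = 0 := by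
        have e1 := spec1.2.1
        have e2 := spec2.2.1
        rw [hcc] at e1
        push_cast at e1 e2 ⊢
        linear_combination e2 - e1
      have h3 := spec2.2.2.2.2 k1 h h02
      have := spec2.1
      omega
    · exact h
    · exfalso
      have h02 : ((o k1 - o k2 : ℤ) : ZMod p) = 0 := by
        have e1 := spec1.2.1
        have e2 := spec2.2.1
        rw [hcc] at e1
        push_cast at e1 e2 ⊢
        linear_combination e1 - e2
      have h3 := spec1.2.2.2.2 k2 h h02
      have := spec1.1
      omega
  refine ⟨?_, ?_, ?_⟩
  · -- Goal A : l < r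
    intro hlr
    have hT0card : ((Finset.range l).image
        (fun k => ((2 * a * m k + b : ℤ) : ZMod p) ^ 2)).card ≤ l :=
      le_trans Finset.card_image_le (le_of_eq (Finset.card_range l))
    have hnsub : ¬ ((Finset.range r).image (fun i : ℕ => (i : ZMod p) ^ 2) ⊆
        (Finset.range l).image (fun k => ((2 * a * m k + b : ℤ) : ZMod p) ^ 2)) := by
      intro hsub
      have h1 := Finset.card_le_card hsub
      rw [sq_image_card hodd'] at h1
      omega
    obtain ⟨u0, hu0mem, hu0not⟩ := Finset.not_subset.mp hnsub
    obtain ⟨i, _, hiu⟩ := Finset.mem_image.mp hu0mem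
    obtain ⟨mm, hmm⟩ := hsolve ((i : ZMod p))
    have hxS : a * mm ^ 2 + b * mm + c ∈ S := by
      rw [hS]
      exact ⟨mm, rfl⟩
    have hxk : ∀ k, k < l → (((a * mm ^ 2 + b * mm + c) - o k : ℤ) : ZMod p) ≠ 0 := by
      intro k hk h0
      rw [hm k] at h0
      have h1 := (hclassS mm (m k)).mp h0
      rw [hmm] at h1
      exact hu0not (Finset.mem_image.mpr ⟨k, Finset.mem_range.mpr hk, by rw [← h1, ← hiu]⟩)
    have hne2 : ∀ k ∈ Finset.range l, (a * mm ^ 2 + b * mm + c) - o k ≠ 0 := by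
      intro k hk h
      exact hxk k (Finset.mem_range.mp hk) (by rw [h]; simp)
    have hw : padicValInt p (∏ k ∈ Finset.range l, ((a * mm ^ 2 + b * mm + c) - o k)) = 0 := by
      rw [padicValInt_prod_s17 l _ hne2]
      exact Finset.sum_eq_zero fun k hk => padicValInt.eq_zero_of_not_dvd fun hd =>
        hxk k (Finset.mem_range.mp hk) ((hcast _).mp hd)
    have hmin := ho.2.2 l _ hxS (Finset.prod_ne_zero_iff.mpr hne2)
    omega
  · -- Goal B : r ≤ l < p
    intro hrl hlp'
    have hlp : l ≤ p := hlp'.le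
    -- lower bound
    obtain ⟨j0, hj0r, hj00⟩ := Cov hrl (o l) (ho.1 l)
    have hj0l : j0 < l := lt_of_lt_of_le hj0r hrl
    have hlb : 1 ≤ padicValInt p (∏ k ∈ Finset.range l, (o l - o k)) := by
      rw [vsum l]
      calc 1 ≤ padicValInt p (o l - o j0) :=
            (one_le_padicValInt (hne l j0 hj0l)).mp ((hcast _).mpr hj00)
        _ ≤ ∑ k ∈ Finset.range l, padicValInt p (o l - o k) :=
            Finset.single_le_sum (f := fun k => padicValInt p (o l - o k))
              (fun i _ => Nat.zero_le _) (Finset.mem_range.mpr hj0l)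
    -- upper bound : find a non-vertex class used exactly once
    have hvert1 : ((Finset.range r).filter
        (fun j => ((2 * a * m j + b : ℤ) : ZMod p) = 0)).card ≤ 1 := by
      refine Finset.card_le_one.mpr ?_
      intro x hx y hy
      have hx' := Finset.mem_filter.mp hx
      have hy' := Finset.mem_filter.mp hy
      have hxr := Finset.mem_range.mp hx'.1
      have hyr := Finset.mem_range.mp hy'.1
      exact Dist x y hxr hyr (by omega) (by omega) (by rw [hx'.2, hy'.2])
    have hTcard : r - 1 ≤ ((Finset.range r).filter
        (fun j => ((2 * a * m j + b : ℤ) : ZMod p) ≠ 0)).card := by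
      have := Finset.card_filter_add_card_filter_not
        (s := Finset.range r) (p := fun j => ((2 * a * m j + b : ℤ) : ZMod p) = 0)
      rw [Finset.card_range] at this
      simp only [ne_eq]
      omega
    have hcImgcard : ((Finset.Ico r l).image cf).card ≤ l - r := by
      refine le_trans Finset.card_image_le ?_
      rw [Nat.card_Ico]
    have hnsub : ¬ ((Finset.range r).filter
        (fun j => ((2 * a * m j + b : ℤ) : ZMod p) ≠ 0)) ⊆ (Finset.Ico r l).image cf := by
      intro hsub
      have := Finset.card_le_card hsub
      omega
    obtain ⟨j, hjT, hjn⟩ := Finset.not_subset.mp hnsub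
    have hjr : j < r := Finset.mem_range.mp (Finset.mem_filter.mp hjT).1
    have hjl : j < l := lt_of_lt_of_le hjr hrl
    have hQj : ((2 * a * m j + b : ℤ) : ZMod p) ≠ 0 := (Finset.mem_filter.mp hjT).2
    -- the witness x = f (m j + p)
    have hxS : a * (m j + (p : ℤ)) ^ 2 + b * (m j + (p : ℤ)) + c ∈ S := by
      rw [hS]
      exact ⟨m j + (p : ℤ), rfl⟩
    have e1 : a * (m j + (p : ℤ)) ^ 2 + b * (m j + (p : ℤ)) + c - o j =
        (p : ℤ) * ((2 * a * m j + b) + a * (p : ℤ)) := by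
      rw [hm j]
      ring
    have hQ1 : (((2 * a * m j + b) + a * (p : ℤ) : ℤ) : ZMod p) ≠ 0 := by
      intro h0
      apply hQj
      push_cast at h0 ⊢
      rw [ZMod.natCast_self] at h0
      linear_combination h0
    have hv1 : padicValInt p (a * (m j + (p : ℤ)) ^ 2 + b * (m j + (p : ℤ)) + c - o j) = 1 := by
      rw [e1, padicValInt.mul (by exact_mod_cast hp.ne_zero)
        (fun h => hQ1 (by rw [h]; simp)),
        padicValInt_self, padicValInt.eq_zero_of_not_dvd (fun hd => hQ1 ((hcast _).mp hd))]
    have hxj0 : ((a * (m j + (p : ℤ)) ^ 2 + b * (m j + (p : ℤ)) + c - o j : ℤ) : ZMod p) = 0 := by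
      rw [e1]
      push_cast
      rw [ZMod.natCast_self]
      ring
    have hxk : ∀ k, k < l → k ≠ j →
        ((a * (m j + (p : ℤ)) ^ 2 + b * (m j + (p : ℤ)) + c - o k : ℤ) : ZMod p) ≠ 0 := by
      intro k hk hkj h0
      have hojk : ((o j - o k : ℤ) : ZMod p) = 0 := by
        push_cast at h0 hxj0 ⊢
        linear_combination h0 - hxj0
      rcases Nat.lt_or_ge k r with hkr | hkr
      · exact hkj (Dist k j hkr hjr hk hjl ((hQsq j k).mp hojk).symm)
      · have hspec := hcf k hkr hk hlp
        have hokj : ((o k - o j : ℤ) : ZMod p) = 0 := by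
          push_cast at hojk ⊢
          linear_combination -hojk
        have := hspec.2.2.2.2 j (by omega) hokj
        exact hjn (Finset.mem_image.mpr ⟨k, Finset.mem_Ico.mpr ⟨hkr, hk⟩, this.symm⟩)
    have hne2 : ∀ k ∈ Finset.range l, a * (m j + (p : ℤ)) ^ 2 + b * (m j + (p : ℤ)) + c - o k ≠ 0 := by
      intro k hk
      rcases eq_or_ne k j with h | h
      · subst h
        rw [e1]
        exact mul_ne_zero (by exact_mod_cast hp.ne_zero) (fun h => hQ1 (by rw [h]; simp))
      · intro h0
        exact hxk k (Finset.mem_range.mp hk) h (by rw [h0]; simp)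
    have hw : padicValInt p (∏ k ∈ Finset.range l,
        (a * (m j + (p : ℤ)) ^ 2 + b * (m j + (p : ℤ)) + c - o k)) = 1 := by
      rw [padicValInt_prod_s17 l _ hne2,
        Finset.sum_eq_single_of_mem j (Finset.mem_range.mpr hjl)
          (fun k hk hkj => padicValInt.eq_zero_of_not_dvd fun hd =>
            hxk k (Finset.mem_range.mp hk) hkj ((hcast _).mp hd))]
      exact hv1
    have hmin := ho.2.2 l _ hxS (Finset.prod_ne_zero_iff.mpr hne2)
    omega
  · -- Goal C : l = p
    intro hlp'
    subst l
    have hrp : r ≤ p := by omega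
    have hrp' : r < p := by omega
    have hlp : p ≤ p := le_refl p
    -- vertex index exists
    obtain ⟨mv, hmv⟩ := hsolve 0
    have hzvS : a * mv ^ 2 + b * mv + c ∈ S := by rw [hS]; exact ⟨mv, rfl⟩
    obtain ⟨jv, hjvr, hjv0⟩ := Cov hrp _ hzvS
    have hQjv : ((2 * a * m jv + b : ℤ) : ZMod p) = 0 := by
      have h2 : (((a * mv ^ 2 + b * mv + c) - (a * m jv ^ 2 + b * m jv + c) : ℤ) : ZMod p) = 0 := by
        rw [← hm jv]
        exact hjv0
      exact (hV mv (m jv) hmv h2).2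
    have hsubTC : (Finset.Ico r p).image cf ⊆
        (Finset.range r).filter (fun j => ¬ ((2 * a * m j + b : ℤ) : ZMod p) = 0) := by
      intro x hx
      rcases Finset.mem_image.mp hx with ⟨k, hk, hcfk⟩
      have hk' := Finset.mem_Ico.mp hk
      have hspec := hcf k hk'.1 hk'.2 hlp
      rw [← hcfk]
      exact Finset.mem_filter.mpr ⟨Finset.mem_range.mpr hspec.1, hspec.2.2.2.1⟩
    have hTsub : (Finset.range r).filter (fun j => ¬ ((2 * a * m j + b : ℤ) : ZMod p) = 0) ⊆
        (Finset.range r).erase jv := by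
      intro x hx
      have hx' := Finset.mem_filter.mp hx
      refine Finset.mem_erase.mpr ⟨?_, hx'.1⟩
      intro hxj
      exact hx'.2 (hxj ▸ hQjv)
    have hT'card : ((Finset.range r).filter
        (fun j => ¬ ((2 * a * m j + b : ℤ) : ZMod p) = 0)).card ≤ r - 1 := by
      have := Finset.card_le_card hTsub
      rwa [Finset.card_erase_of_mem (Finset.mem_range.mpr hjvr), Finset.card_range] at this
    have hcImgcard : ((Finset.Ico r p).image cf).card = p - r := by
      rw [Finset.card_image_of_injOn, Nat.card_Ico]
      intro x hx y hy hxy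
      exact cInj hlp x y (Finset.mem_Ico.mp hx).1 (Finset.mem_Ico.mp hx).2
        (Finset.mem_Ico.mp hy).1 (Finset.mem_Ico.mp hy).2 hxy
    have hTeq : (Finset.Ico r p).image cf =
        (Finset.range r).filter (fun j => ¬ ((2 * a * m j + b : ℤ) : ZMod p) = 0) :=
      Finset.eq_of_subset_of_card_le hsubTC (by omega)
    have hpartner : ∀ j, j < r → ¬ ((2 * a * m j + b : ℤ) : ZMod p) = 0 →
        ∃ k, r ≤ k ∧ k < p ∧ cf k = j := by
      intro j hjr hQj
      have hmem2 : j ∈ (Finset.Ico r p).image cf := by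
        rw [hTeq]
        exact Finset.mem_filter.mpr ⟨Finset.mem_range.mpr hjr, hQj⟩
      rcases Finset.mem_image.mp hmem2 with ⟨k, hk, hcfk⟩
      exact ⟨k, (Finset.mem_Ico.mp hk).1, (Finset.mem_Ico.mp hk).2, hcfk⟩
    -- lower bound
    have hlb : 2 ≤ padicValInt p (∏ k ∈ Finset.range p, (o p - o k)) := by
      rw [vsum p]
      obtain ⟨j0, hj0r, hj00⟩ := Cov hrp (o p) (ho.1 p)
      have hj0p : j0 < p := by omega
      by_cases hQ0 : ((2 * a * m j0 + b : ℤ) : ZMod p) = 0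
      · have hsym : (((a * m j0 ^ 2 + b * m j0 + c) -
            (a * m p ^ 2 + b * m p + c) : ℤ) : ZMod p) = 0 := by
          rw [← hm j0, ← hm p]
          push_cast at hj00 ⊢
          linear_combination -hj00
        have hdd := hV2 (m j0) (m p) hQ0 hsym
        rw [← hm j0, ← hm p] at hdd
        have hdd' : (p : ℤ) ^ 2 ∣ (o p - o j0) := by
          have := dvd_neg.mpr hdd
          rwa [neg_sub] at this
        calc 2 ≤ padicValInt p (o p - o j0) := (two_le_padicValInt (hne p j0 hj0p)).mp hdd'
          _ ≤ ∑ k ∈ Finset.range p, padicValInt p (o p - o k) :=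
            Finset.single_le_sum (f := fun k => padicValInt p (o p - o k))
              (fun i _ => Nat.zero_le _) (Finset.mem_range.mpr hj0p)
      · obtain ⟨k, hkr, hkp, hcfk⟩ := hpartner j0 hj0r hQ0
        have hspec := hcf k hkr hkp hlp
        rw [hcfk] at hspec
        have hkj0 : ((o p - o k : ℤ) : ZMod p) = 0 := by
          have e1 := hspec.2.1
          push_cast at hj00 e1 ⊢
          linear_combination hj00 - e1
        have hjk : j0 ≠ k := by omega
        have hsub : ({j0, k} : Finset ℕ) ⊆ Finset.range p := by
          intro x hx
          rcases Finset.mem_insert.mp hx with h | h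
          · exact Finset.mem_range.mpr (h ▸ hj0p)
          · exact Finset.mem_range.mpr ((Finset.mem_singleton.mp h) ▸ hkp)
        have hps : padicValInt p (o p - o j0) + padicValInt p (o p - o k) ≤
            ∑ i ∈ Finset.range p, padicValInt p (o p - o i) := by
          simpa [Finset.sum_pair hjk] using
            Finset.sum_le_sum_of_subset (f := fun i => padicValInt p (o p - o i)) hsub
        have h1 := (one_le_padicValInt (hne p j0 hj0p)).mp ((hcast _).mpr hj00)
        have h2 := (one_le_padicValInt (hne p k hkp)).mp ((hcast _).mpr hkj0)
        omega
    -- upper bound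
    have hspecr := hcf r (le_refl r) hrp' hlp
    set j := cf r with hj
    have hjr : j < r := hspecr.1
    have hQj : ((2 * a * m j + b : ℤ) : ZMod p) ≠ 0 := hspecr.2.2.2.1
    have hjner : j ≠ r := by omega
    obtain ⟨d, hdd⟩ : (p : ℤ) ∣ (o j - o r) := by
      have := (hcast _).mpr hspecr.2.1
      have h2 := dvd_neg.mpr this
      rwa [neg_sub] at h2
    have hpd : ((d : ℤ) : ZMod p) ≠ 0 := by
      intro h0
      have hpdvd : (p : ℤ) ∣ d := (hcast d).mpr h0
      have h2 : (p : ℤ) ^ 2 ∣ (o r - o j) := by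
        rcases hpdvd with ⟨e, he⟩
        refine ⟨-e, ?_⟩
        have : o r - o j = -(o j - o r) := by ring
        rw [this, hdd, he]
        ring
      have := (two_le_padicValInt (hne r j (by omega))).mp h2
      have := hspecr.2.2.1
      omega
    have hcard2 : ({0, -(((d : ℤ) : ZMod p)) * (((2 * a * m j + b : ℤ) : ZMod p))⁻¹} :
        Finset (ZMod p)).card ≤ 2 :=
      le_trans (Finset.card_insert_le _ _) (by simp)
    have huniv : ¬ (Finset.univ : Finset (ZMod p)) ⊆
        {0, -(((d : ℤ) : ZMod p)) * (((2 * a * m j + b : ℤ) : ZMod p))⁻¹} := by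
      intro hsub
      have h1 := Finset.card_le_card hsub
      rw [Finset.card_univ, ZMod.card] at h1
      omega
    obtain ⟨sb, _, hsb⟩ := Finset.not_subset.mp huniv
    rw [Finset.mem_insert, Finset.mem_singleton] at hsb
    push_neg at hsb
    have hsZ : (((sb.val : ℤ) : ℤ) : ZMod p) = sb := by
      push_cast
      exact ZMod.natCast_zmod_val sb
    -- the witness x
    have hxS : a * (m j + (p : ℤ) * (sb.val : ℤ)) ^ 2 + b * (m j + (p : ℤ) * (sb.val : ℤ)) + c ∈ S := by
      rw [hS]
      exact ⟨m j + (p : ℤ) * (sb.val : ℤ), rfl⟩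
    have e1 : a * (m j + (p : ℤ) * (sb.val : ℤ)) ^ 2 + b * (m j + (p : ℤ) * (sb.val : ℤ)) + c - o j =
        (p : ℤ) * ((sb.val : ℤ) * ((2 * a * m j + b) + a * (p : ℤ) * (sb.val : ℤ))) := by
      rw [hm j]
      ring
    have e2 : a * (m j + (p : ℤ) * (sb.val : ℤ)) ^ 2 + b * (m j + (p : ℤ) * (sb.val : ℤ)) + c - o r =
        (p : ℤ) * ((sb.val : ℤ) * ((2 * a * m j + b) + a * (p : ℤ) * (sb.val : ℤ)) + d) := by
      have hsplit : a * (m j + (p : ℤ) * (sb.val : ℤ)) ^ 2 + b * (m j + (p : ℤ) * (sb.val : ℤ)) + c - o r =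
          (a * (m j + (p : ℤ) * (sb.val : ℤ)) ^ 2 + b * (m j + (p : ℤ) * (sb.val : ℤ)) + c - o j) +
          (o j - o r) := by ring
      rw [hsplit, e1, hdd]
      ring
    have hin1 : (((sb.val : ℤ) * ((2 * a * m j + b) + a * (p : ℤ) * (sb.val : ℤ)) : ℤ) : ZMod p) =
        sb * ((2 * a * m j + b : ℤ) : ZMod p) := by
      push_cast [ZMod.natCast_zmod_val, ZMod.natCast_self]
      ring
    have hin1ne : (((sb.val : ℤ) * ((2 * a * m j + b) + a * (p : ℤ) * (sb.val : ℤ)) : ℤ) : ZMod p) ≠ 0 := by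
      rw [hin1]
      exact mul_ne_zero hsb.1 hQj
    have hin2 : (((sb.val : ℤ) * ((2 * a * m j + b) + a * (p : ℤ) * (sb.val : ℤ)) + d : ℤ) : ZMod p) =
        sb * ((2 * a * m j + b : ℤ) : ZMod p) + ((d : ℤ) : ZMod p) := by
      push_cast [ZMod.natCast_zmod_val, ZMod.natCast_self]
      ring
    have hin2ne : (((sb.val : ℤ) * ((2 * a * m j + b) + a * (p : ℤ) * (sb.val : ℤ)) + d : ℤ) : ZMod p) ≠ 0 := by
      rw [hin2]
      intro h0
      apply hsb.2
      have h1 : -((d : ℤ) : ZMod p) = sb * ((2 * a * m j + b : ℤ) : ZMod p) := by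
        linear_combination -h0
      rw [h1, mul_assoc, mul_inv_cancel₀ hQj, mul_one]
    have hpne : ((p : ℤ)) ≠ 0 := by exact_mod_cast hp.ne_zero
    have hvj : padicValInt p (a * (m j + (p : ℤ) * (sb.val : ℤ)) ^ 2 +
        b * (m j + (p : ℤ) * (sb.val : ℤ)) + c - o j) = 1 := by
      rw [e1, padicValInt.mul hpne (fun h => hin1ne (by rw [h]; simp)),
        padicValInt_self, padicValInt.eq_zero_of_not_dvd (fun hdv => hin1ne ((hcast _).mp hdv))]
    have hvr : padicValInt p (a * (m j + (p : ℤ) * (sb.val : ℤ)) ^ 2 +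
        b * (m j + (p : ℤ) * (sb.val : ℤ)) + c - o r) = 1 := by
      rw [e2, padicValInt.mul hpne (fun h => hin2ne (by rw [h]; simp)),
        padicValInt_self, padicValInt.eq_zero_of_not_dvd (fun hdv => hin2ne ((hcast _).mp hdv))]
    have hxj0 : ((a * (m j + (p : ℤ) * (sb.val : ℤ)) ^ 2 +
        b * (m j + (p : ℤ) * (sb.val : ℤ)) + c - o j : ℤ) : ZMod p) = 0 := by
      rw [e1]
      push_cast [ZMod.natCast_self]
      ring
    have hxk : ∀ k', k' < p → k' ≠ j → k' ≠ r →
        ((a * (m j + (p : ℤ) * (sb.val : ℤ)) ^ 2 +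
          b * (m j + (p : ℤ) * (sb.val : ℤ)) + c - o k' : ℤ) : ZMod p) ≠ 0 := by
      intro k' h1 h2 h3 h0
      have hojk : ((o j - o k' : ℤ) : ZMod p) = 0 := by
        push_cast at h0 hxj0 ⊢
        linear_combination h0 - hxj0
      rcases Nat.lt_or_ge k' r with hkr' | hkr'
      · exact h2 (Dist k' j hkr' hjr (by omega) (by omega) ((hQsq j k').mp hojk).symm)
      · have hspec' := hcf k' hkr' h1 hlp
        have hokj : ((o k' - o j : ℤ) : ZMod p) = 0 := by
          push_cast at hojk ⊢
          linear_combination -hojk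
        have hju := hspec'.2.2.2.2 j (by omega) hokj
        exact h3 (cInj hlp k' r hkr' h1 (le_refl r) hrp' (by rw [← hju]))
    have hne2 : ∀ k' ∈ Finset.range p, a * (m j + (p : ℤ) * (sb.val : ℤ)) ^ 2 +
        b * (m j + (p : ℤ) * (sb.val : ℤ)) + c - o k' ≠ 0 := by
      intro k' hk'
      rcases eq_or_ne k' j with h | h
      · subst h
        rw [e1]
        exact mul_ne_zero hpne (fun h => hin1ne (by rw [h]; simp))
      rcases eq_or_ne k' r with h' | h'
      · subst h'
        rw [e2]
        exact mul_ne_zero hpne (fun h => hin2ne (by rw [h]; simp))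
      · intro h0
        exact hxk k' (Finset.mem_range.mp hk') h h' (by rw [h0]; simp)
    have hpairsub : ({j, r} : Finset ℕ) ⊆ Finset.range p := by
      intro x hx
      rcases Finset.mem_insert.mp hx with h | h
      · exact Finset.mem_range.mpr (by omega)
      · rw [Finset.mem_singleton.mp h]
        exact Finset.mem_range.mpr hrp'
    have hw : padicValInt p (∏ k' ∈ Finset.range p,
        (a * (m j + (p : ℤ) * (sb.val : ℤ)) ^ 2 +
          b * (m j + (p : ℤ) * (sb.val : ℤ)) + c - o k')) = 2 := by
      rw [padicValInt_prod_s17 p _ hne2]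
      rw [← Finset.sum_subset hpairsub (fun k' hk' hk'n =>
        padicValInt.eq_zero_of_not_dvd fun hdv =>
          hxk k' (Finset.mem_range.mp hk')
            (fun h => hk'n (by rw [h]; exact Finset.mem_insert_self _ _))
            (fun h => hk'n (by rw [h]; exact Finset.mem_insert_of_mem (Finset.mem_singleton_self _)))
            ((hcast _).mp hdv))]
      rw [Finset.sum_pair hjner, hvj, hvr]
    have hmin := ho.2.2 p _ hxS (Finset.prod_ne_zero_iff.mpr hne2)
    omega
end

section
/- Let S be an infinite subset of ℤ. For every positive integer l, the ordinary factorial l! divides the Bhargava factorial l!_S. Consequently, for every prime p, v_p(l!_S) → ∞ as l → ∞, and rad(l!_S) = o(l!_S). -/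
open Filter

/-- The algebraic radical: the product of the distinct prime divisors. -/
def rad (n : ℕ) : ℕ := n.primeFactors.prod id

/-- `F` is the Bhargava factorial function of `S`: `F l = l!_S = ∏_p p^{v_p(l;S)}`. -/
def IsBhargavaFactorial (S : Set ℤ) (F : ℕ → ℕ) : Prop :=
  (∀ l, 0 < F l) ∧
  ∀ p : ℕ, p.Prime → ∀ c : ℕ → ℤ, IsPOrdering p S c →
    ∀ l, padicValNat p (F l) = padicValInt p (∏ k ∈ Finset.range l, (c l - c k))

/-!
The heart of the matter is Bhargava's fixed-divisor bound: if `c` is a `p`-ordering of `S` and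
`f ∈ ℤ[X]` is monic of degree `l` with `p ^ e ∣ f s` for every `s ∈ S`, then
`p ^ e ∣ ∏_{k<l} (c l - c k)`. One divides `f` successively by `X - c 0, X - c 1, …`; at step `k`
the constant term `r` satisfies `p ^ e ∣ r · ∏_{j<k} (c k - c j)`, and by the minimality defining
`c k` the same divisibility holds with `c k` replaced by any `x ∈ S`, so the constant term can be
dropped and the quotient carries the hypothesis to step `k + 1`.

For `f = X (X - 1) ⋯ (X - l + 1)`, whose values are multiples of `l!`, this gives
`v_p(l!) ≤ v_p(l!_S)` for every prime `p`. Then `v_p(l!_S) ≥ v_p(l!) ≥ ⌊l / p⌋ → ∞`, and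
`rad m · 2 ^ v_2(m) ∣ 2 m` gives `rad(l!_S) / l!_S ≤ 2 ^ (1 - v_2(l!_S)) → 0`.
-/

open Polynomial

namespace IsPOrdering

variable {p : ℕ} {S : Set ℤ} {c : ℕ → ℤ}

theorem pow_dvd_mul_prod_sub [Fact p.Prime] (hc : IsPOrdering p S c) {e n : ℕ} {b : ℤ}
    (h : (p : ℤ) ^ e ∣ b * ∏ k ∈ Finset.range n, (c n - c k)) {x : ℤ} (hx : x ∈ S) :
    (p : ℤ) ^ e ∣ b * ∏ k ∈ Finset.range n, (x - c k) := by
  by_cases hb : b = 0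
  · simp [hb]
  by_cases hx0 : ∏ k ∈ Finset.range n, (x - c k) = 0
  · simp [hx0]
  have hmin := hc.2.2 n x hx hx0
  rw [padicValInt_dvd_iff, padicValInt.mul hb (hc.2.1 n)] at h
  rw [padicValInt_dvd_iff, padicValInt.mul hb hx0]
  exact .inr (h.resolve_left (mul_ne_zero hb (hc.2.1 n)) |>.trans (by omega))

theorem pow_dvd_prod_sub_of_dvd_mul_eval [Fact p.Prime] (hc : IsPOrdering p S c) {e m : ℕ}
    (k : ℕ) {f : ℤ[X]} (hf : f.Monic) (hdeg : f.natDegree = m)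
    (hdvd : ∀ x ∈ S, (p : ℤ) ^ e ∣ (∏ j ∈ Finset.range k, (x - c j)) * f.eval x) :
    (p : ℤ) ^ e ∣ ∏ j ∈ Finset.range (k + m), (c (k + m) - c j) := by
  induction m generalizing k f with
  | zero => simpa [eq_one_of_monic_natDegree_zero hf hdeg] using hdvd (c k) (hc.1 k)
  | succ m ih =>
    set q := f /ₘ (X - C (c k))
    have hsplit : f = C (f.eval (c k)) + (X - C (c k)) * q := by
      rw [← modByMonic_X_sub_C_eq_C_eval, modByMonic_add_div]
    have hq_deg : q.natDegree = m := by
      rw [natDegree_divByMonic _ (monic_X_sub_C _), natDegree_X_sub_C, hdeg, Nat.add_sub_cancel]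
    have hq_monic : q.Monic := by
      refine (monic_X_sub_C (c k)).of_mul_monic_left ?_
      rw [eq_sub_of_add_eq' hsplit.symm]
      refine hf.sub_of_left (degree_C_le.trans_lt ?_)
      rw [← natDegree_pos_iff_degree_pos]
      omega
    have hconst : ∀ x ∈ S, (p : ℤ) ^ e ∣ f.eval (c k) * ∏ j ∈ Finset.range k, (x - c j) :=
      fun x hx => hc.pow_dvd_mul_prod_sub (by rw [mul_comm]; exact hdvd (c k) (hc.1 k)) hx
    rw [show k + (m + 1) = k + 1 + m by omega]
    refine ih (k + 1) hq_monic hq_deg fun x hx => ?_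
    have hfx := hdvd x hx
    rw [hsplit, eval_add, eval_C, eval_mul, eval_sub, eval_X, eval_C, mul_add] at hfx
    rw [Finset.prod_range_succ, mul_assoc]
    exact (dvd_add_right (by rw [mul_comm]; exact hconst x hx)).mp hfx

theorem pow_dvd_prod_sub_of_dvd_eval [Fact p.Prime] (hc : IsPOrdering p S c) {e l : ℕ}
    {f : ℤ[X]} (hf : f.Monic) (hdeg : f.natDegree = l)
    (hdvd : ∀ x ∈ S, (p : ℤ) ^ e ∣ f.eval x) :
    (p : ℤ) ^ e ∣ ∏ k ∈ Finset.range l, (c l - c k) := by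
  simpa using hc.pow_dvd_prod_sub_of_dvd_mul_eval 0 hf hdeg (by simpa using hdvd)

end IsPOrdering

theorem factorial_dvd_descPochhammer_eval (n : ℕ) (x : ℤ) :
    (n.factorial : ℤ) ∣ (descPochhammer ℤ n).eval x := by
  rw [eval_eq_smeval, Ring.descPochhammer_eq_factorial_smul_choose, nsmul_eq_mul]
  exact dvd_mul_right _ _


section Construction

variable {p : ℕ} {S : Set ℤ}

noncomputable def pMinimizer (p : ℕ) (S : Set ℤ) (P : ℤ → ℤ) : ℤ :=
  Classical.epsilon (MinimalFor (fun x => x ∈ S ∧ P x ≠ 0) (fun x => padicValInt p (P x)))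

theorem minimalFor_pMinimizer {P : ℤ → ℤ} (h : ∃ x ∈ S, P x ≠ 0) :
    MinimalFor (fun x => x ∈ S ∧ P x ≠ 0) (fun x => padicValInt p (P x)) (pMinimizer p S P) :=
  Classical.epsilon_spec (exists_minimalFor_of_wellFoundedLT _ _ h)

noncomputable def greedyPOrdering (p : ℕ) (S : Set ℤ) (n : ℕ) : ℤ :=
  pMinimizer p S fun x => ∏ k ∈ (Finset.range n).attach, (x - greedyPOrdering p S k)
termination_by n
decreasing_by exact Finset.mem_range.mp k.2

theorem greedyPOrdering_eq (n : ℕ) :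
    greedyPOrdering p S n =
      pMinimizer p S fun x => ∏ k ∈ Finset.range n, (x - greedyPOrdering p S k) := by
  rw [greedyPOrdering]
  congr with x
  exact Finset.prod_attach _ fun k => x - greedyPOrdering p S k

theorem Set.Infinite.exists_prod_sub_ne_zero (hS : S.Infinite) (c : ℕ → ℤ) (n : ℕ) :
    ∃ x ∈ S, ∏ k ∈ Finset.range n, (x - c k) ≠ 0 := by
  obtain ⟨x, hxS, hx⟩ := (hS.sdiff ((Finset.range n).image c).finite_toSet).nonempty
  refine ⟨x, hxS, Finset.prod_ne_zero_iff.mpr fun k hk => sub_ne_zero.mpr ?_⟩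
  rintro rfl
  exact hx (Finset.mem_image_of_mem c hk)

theorem isPOrdering_greedyPOrdering (hS : S.Infinite) :
    IsPOrdering p S (greedyPOrdering p S) := by
  have h (n : ℕ) := greedyPOrdering_eq (p := p) (S := S) n ▸
    minimalFor_pMinimizer (hS.exists_prod_sub_ne_zero (greedyPOrdering p S) n)
  exact ⟨fun n => (h n).prop.1, fun n => (h n).prop.2, fun n x hx hx0 => (h n).le ⟨hx, hx0⟩⟩

end Construction

theorem rad_mul_pow_factorization_dvd {p : ℕ} (hp : p.Prime) (m : ℕ) :
    rad m * p ^ m.factorization p ∣ p * m := by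
  have hrad : rad m ∣ p * ordCompl[p] m := by
    refine Finset.prod_primes_dvd _ (fun q hq => (Nat.prime_of_mem_primeFactors hq).prime)
      fun q hq => ?_
    rcases eq_or_ne q p with rfl | hqp
    · exact dvd_mul_right q _
    · have hq' := Nat.prime_of_mem_primeFactors hq
      exact (Nat.dvd_ordCompl_of_dvd_not_dvd (Nat.dvd_of_mem_primeFactors hq)
        ((Nat.prime_dvd_prime_iff_eq hp hq').not.mpr hqp.symm)).mul_left p
  calc rad m * p ^ m.factorization p ∣ p * ordCompl[p] m * p ^ m.factorization p :=
        mul_dvd_mul_right hrad _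
    _ = p * m := by rw [mul_assoc, mul_comm (ordCompl[p] m), Nat.ordProj_mul_ordCompl_eq_self]


theorem rad_div_self_le {p m : ℕ} (hp : p.Prime) (hm : m ≠ 0) :
    (rad m : ℝ) / m ≤ p * (p : ℝ)⁻¹ ^ padicValNat p m := by
  have hle : (rad m : ℝ) * p ^ padicValNat p m ≤ p * m := by
    rw [← Nat.factorization_def m hp]
    exact_mod_cast Nat.le_of_dvd (Nat.mul_pos hp.pos (Nat.pos_of_ne_zero hm))
      (rad_mul_pow_factorization_dvd hp m)
  have hm' : (0 : ℝ) < m := by exact_mod_cast Nat.pos_of_ne_zero hm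
  have hp' : (0 : ℝ) < p ^ padicValNat p m := by exact_mod_cast pow_pos hp.pos _
  rw [inv_pow, ← div_eq_mul_inv, div_le_div_iff₀ hm' hp']
  linarith

theorem tendsto_rad_div_self_nhds_zero {α : Type*} {L : Filter α} {p : ℕ} (hp : p.Prime)
    {g : α → ℕ} (hg : ∀ a, g a ≠ 0) (h : Tendsto (fun a => padicValNat p (g a)) L atTop) :
    Tendsto (fun a => (rad (g a) : ℝ) / g a) L (nhds 0) := by
  have hp1 : (1 : ℝ) < p := by exact_mod_cast hp.one_lt
  have hpow : Tendsto (fun a => (p : ℝ) * (p : ℝ)⁻¹ ^ padicValNat p (g a)) L (nhds 0) := by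
    simpa using ((tendsto_pow_atTop_nhds_zero_of_lt_one (by positivity)
      (inv_lt_one_of_one_lt₀ hp1)).comp h).const_mul (p : ℝ)
  exact squeeze_zero (fun a => by positivity) (fun a => rad_div_self_le hp (hg a)) hpow

theorem tendsto_padicValNat_factorial {p : ℕ} (hp : p.Prime) :
    Tendsto (fun l : ℕ => padicValNat p l.factorial) atTop atTop := by
  have := Fact.mk hp
  refine tendsto_atTop_atTop.mpr fun b => ⟨p * b, fun l hl => ?_⟩
  calc b ≤ padicValNat p (p * b).factorial := by rw [padicValNat_factorial_mul]; omega
    _ ≤ padicValNat p l.factorial :=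
      (padicValNat_dvd_iff_le l.factorial_ne_zero).mp
        (pow_padicValNat_dvd.trans (Nat.factorial_dvd_factorial hl))

section BhargavaFactorial

variable {S : Set ℤ} {F : ℕ → ℕ}

theorem padicValNat_factorial_le_of_isBhargavaFactorial (hS : S.Infinite)
    (hF : IsBhargavaFactorial S F) {p : ℕ} (hp : p.Prime) (l : ℕ) :
    padicValNat p l.factorial ≤ padicValNat p (F l) := by
  have := Fact.mk hp
  have hc := isPOrdering_greedyPOrdering (p := p) hS
  have hdvd := hc.pow_dvd_prod_sub_of_dvd_eval (monic_descPochhammer ℤ l)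
    (descPochhammer_natDegree ℤ l) fun x _ =>
      (Int.natCast_dvd_natCast.mpr pow_padicValNat_dvd).trans
        (factorial_dvd_descPochhammer_eval l x)
  rw [hF.2 p hp _ hc l]
  exact ((padicValInt_dvd_iff _ _).mp (by exact_mod_cast hdvd)).resolve_left (hc.2.1 l)

theorem factorial_dvd_of_isBhargavaFactorial (hS : S.Infinite) (hF : IsBhargavaFactorial S F)
    (l : ℕ) : l.factorial ∣ F l := by
  refine (Nat.factorization_prime_le_iff_dvd l.factorial_ne_zero (hF.1 l).ne').mp fun p hp => ?_
  rw [Nat.factorization_def _ hp, Nat.factorization_def _ hp]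
  exact padicValNat_factorial_le_of_isBhargavaFactorial hS hF hp l

end BhargavaFactorial

theorem factorial_dvd_bhargava_factorial
    (S : Set ℤ) (hS : S.Infinite) (F : ℕ → ℕ) (hF : IsBhargavaFactorial S F) :
    (∀ l, Nat.factorial l ∣ F l) ∧
    (∀ p : ℕ, p.Prime →
      Tendsto (fun l => padicValNat p (F l)) atTop atTop) ∧
    Tendsto (fun l => (rad (F l) : ℝ) / (F l : ℝ)) atTop (nhds 0) := by
  have hval (p : ℕ) (hp : p.Prime) : Tendsto (fun l => padicValNat p (F l)) atTop atTop :=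
    tendsto_atTop_mono (padicValNat_factorial_le_of_isBhargavaFactorial hS hF hp)
      (tendsto_padicValNat_factorial hp)
  exact ⟨factorial_dvd_of_isBhargavaFactorial hS hF, hval,
    tendsto_rad_div_self_nhds_zero Nat.prime_two (fun l => (hF.1 l).ne') (hval 2 Nat.prime_two)⟩
end
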